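/- arXiv:1712.09418 — 8 statements merged into one kernel-verified Lean document; each statement's English description precedes it below -/
import Mathlib

section
/- If a set C of Horn clauses over a finite variable set X is satisfiable, then the intersection of all satisfying valuations (viewed as the set of variables assigned true) is itself a satisfying valuation of C; i.e., Horn formulas have a least model. -/
structure HornClause (V : Type) where
  prem : Finset V
  concl : Option V

def HornClause.sat {V : Type} (v : V → Bool) (c : HornClause V) : Prop :=
  (∀ x ∈ c.prem, v x = true) → ∃ y, c.concl = some y ∧ v y = true

def SatAll {V : Type} (v : V → Bool) (C : Set (HornClause V)) : Prop :=
  ∀ c ∈ C, c.sat v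

/-- Horn formulas have a least model: the intersection of all satisfying
valuations (the valuation true exactly on the variables true in every
satisfying valuation) itself satisfies C. -/
theorem stmt1 {V : Type} [Fintype V] (C : Set (HornClause V))
    (hsat : ∃ v : V → Bool, SatAll v C) :
    ∃ m : V → Bool, SatAll m C ∧
      ∀ x, m x = true ↔ (∀ v : V → Bool, SatAll v C → v x = true) := by
  classical
  obtain ⟨v0, hv0⟩ := hsat
  refine ⟨fun x => decide (∀ v : V → Bool, SatAll v C → v x = true), ?_, ?_⟩
  · intro c hc hprem
    have hprem' : ∀ v : V → Bool, SatAll v C → ∀ x ∈ c.prem, v x = true := by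
      intro v hv x hx
      exact of_decide_eq_true (hprem x hx) v hv
    obtain ⟨y, hy, _⟩ := hv0 c hc (hprem' v0 hv0)
    refine ⟨y, hy, decide_eq_true ?_⟩
    intro v hv
    obtain ⟨y', hy', hvy'⟩ := hv c hc (hprem' v hv)
    rw [hy] at hy'
    injection hy' with h
    rwa [h]
  · intro x
    simp
end

section
/- Let C be a set of Horn clauses and suppose there is a C-pebbling of (y, '*x') from True, where marks '*x' are introduced by marking x itself with '*x' and propagated: y gets mark '*x' whenever some clause (x₁ ∧ ... ∧ x_l) ⟹ y has all premises marked either '*' or '*x'. Then every valuation v with v(x) = true that satisfies C also has v(y) = true. -/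
/-- `Marked C x` : variable x receives mark '*' via a finite pebbling sequence.
(Clauses `true ⟹ x` have empty premise set, i.e. premise True.) -/
inductive Marked {V : Type} (C : Set (HornClause V)) : V → Prop
  | step (c : HornClause V) (hc : c ∈ C) (y : V) (hy : c.concl = some y)
      (h : ∀ x ∈ c.prem, Marked C x) : Marked C y

/-- `MarkedRel C z y` : variable y receives the relative mark '*z'. The mark
'*z' starts at z itself and propagates along a clause when all premises are
marked '*' or '*z' (the premises carrying mark '*z' are collected in S). -/
inductive MarkedRel {V : Type} (C : Set (HornClause V)) (z : V) : V → Prop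
  | self : MarkedRel C z z
  | step (c : HornClause V) (hc : c ∈ C) (y : V) (hy : c.concl = some y)
      (S : Finset V) (hS : ∀ x ∈ c.prem, x ∈ S ∨ Marked C x)
      (h : ∀ x ∈ S, MarkedRel C z x) : MarkedRel C z y

/-- False is marked '*' : some clause with conclusion false has all premises marked '*'. -/
def BotMarked {V : Type} (C : Set (HornClause V)) : Prop :=
  ∃ c ∈ C, c.concl = none ∧ ∀ x ∈ c.prem, Marked C x

/-- False is marked '*z' : some clause with conclusion false has all premises
marked '*' or '*z'. -/
def BotMarkedRel {V : Type} (C : Set (HornClause V)) (z : V) : Prop :=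
  ∃ c ∈ C, c.concl = none ∧ ∀ x ∈ c.prem, Marked C x ∨ MarkedRel C z x


theorem marked_true {V : Type} (C : Set (HornClause V)) (v : V → Bool)
    (hv : SatAll v C) {y : V} (h : Marked C y) : v y = true := by
  induction h with
  | step c hc y hy hprem ih =>
    obtain ⟨z, hz, hvz⟩ := hv c hc ih
    rw [hy] at hz; cases hz; exact hvz

/-- Proposition 2: if y is marked '*x', then every satisfying valuation with
v(x) = true also has v(y) = true. -/
theorem stmt4 {V : Type} (C : Set (HornClause V)) (x y : V)
    (hxy : MarkedRel C x y) (v : V → Bool) (hvx : v x = true) (hv : SatAll v C) :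
    v y = true := by
  induction hxy with
  | self => exact hvx
  | step c hc y hy S hS hrel ih =>
    obtain ⟨z, hz, hvz⟩ := hv c hc (fun w hw => (hS w hw).elim (ih w) (marked_true C v hv))
    rw [hy] at hz; cases hz; exact hvz
end

section
/- Let C be a set of Horn clauses over X, let y ∈ X, and consider the complete pebbling marking in which False is NOT marked '*y'. Then the valuation v assigning true to exactly the variables marked '*' or '*y' (and false to all others) satisfies C. -/
/-- Proposition 4: if False is not marked '*y', then the valuation true exactly
on the variables marked '*' or '*y' satisfies C. -/
theorem stmt6 {V : Type} (C : Set (HornClause V)) (y : V)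
    (hbot : ¬ BotMarkedRel C y)
    (v : V → Bool) (hv : ∀ x, v x = true ↔ (Marked C x ∨ MarkedRel C y x)) :
    SatAll v C := by
  classical
  intro c hc hprem
  have hall : ∀ x ∈ c.prem, Marked C x ∨ MarkedRel C y x := fun x hx =>
    (hv x).mp (hprem x hx)
  cases hconcl : c.concl with
  | none => exact absurd ⟨c, hc, hconcl, hall⟩ hbot
  | some z =>
    refine ⟨z, rfl, (hv z).mpr (Or.inr ?_)⟩
    refine MarkedRel.step c hc z hconcl (c.prem.filter (MarkedRel C y)) ?_ ?_
    · intro x hx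
      rcases hall x hx with h | h
      · exact Or.inr h
      · exact Or.inl (Finset.mem_filter.mpr ⟨hx, h⟩)
    · intro x hx
      exact (Finset.mem_filter.mp hx).2
end

section
/- Let C be a set of Horn clauses over a finite set X with distinguished constants True and False, and consider the complete pebbling marking. Then C is unsatisfiable if and only if False is marked '*'. -/
/-
Every satisfying valuation is true on every marked variable, so a
clause with conclusion False whose premises are all marked is violated. Conversely, if False is
not marked, the marking itself, read as a valuation, satisfies every clause: a clause whose
premises are all marked either concludes False, which is excluded, or marks its conclusion.
-/

section

variable {V : Type} {C : Set (HornClause V)}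

theorem Marked.eq_true_of_satAll {v : V → Bool} (hv : SatAll v C) {x : V} (hx : Marked C x) :
    v x = true := by
  induction hx with
  | step c hc y hy _ ih =>
    obtain ⟨y', hy', hvy'⟩ := hv c hc ih
    rw [hy, Option.some_inj] at hy'
    exact hy' ▸ hvy'

theorem not_satAll_of_botMarked (h : BotMarked C) (v : V → Bool) : ¬ SatAll v C := by
  obtain ⟨c, hc, hnone, hprem⟩ := h
  intro hv
  obtain ⟨y, hy, -⟩ := hv c hc fun x hx => (hprem x hx).eq_true_of_satAll hv
  exact Option.some_ne_none y (hy.symm.trans hnone)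

open Classical in
theorem satAll_marked_of_not_botMarked (h : ¬ BotMarked C) :
    SatAll (fun x => decide (Marked C x)) C := by
  intro c hc hprem
  have hmarked : ∀ x ∈ c.prem, Marked C x := fun x hx => of_decide_eq_true (hprem x hx)
  cases hy : c.concl with
  | none => exact absurd ⟨c, hc, hy, hmarked⟩ h
  | some y => exact ⟨y, rfl, decide_eq_true (.step c hc y hy hmarked)⟩

end

theorem stmt7_general {V : Type} (C : Set (HornClause V)) :
    (¬ ∃ v : V → Bool, SatAll v C) ↔ BotMarked C := by
  refine ⟨fun hunsat => ?_, fun hbot ⟨v, hv⟩ => not_satAll_of_botMarked hbot v hv⟩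
  by_contra hbot
  exact hunsat ⟨_, satAll_marked_of_not_botMarked hbot⟩

/-- C is unsatisfiable iff False is marked '*' in the complete marking. -/
theorem stmt7 {V : Type} [Fintype V] (C : Set (HornClause V)) :
    (¬ ∃ v : V → Bool, SatAll v C) ↔ BotMarked C :=
  stmt7_general C
end

section
/- Let C be a satisfiable set of Horn clauses over a finite set X with the complete pebbling marking. Then a variable x ∈ X is forced to false by C (i.e., v(x) = false in every satisfying valuation v) if and only if False is marked '*x'. -/
/-!
Every valuation satisfying `C` makes all '*'-marked variables true, and if it makes `x` true
also all '*x'-marked ones; so a clause with conclusion False whose premises are all marked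
'*' or '*x' is violated, i.e. `x` is forced false. Conversely, if False is not marked '*x',
the valuation that is true exactly on the variables marked '*' or '*x' is closed under the
clauses with a variable conclusion and violates no clause with conclusion False, so it is a
model with `x` true.
-/

namespace HornClause

variable {V : Type} {v : V → Bool} {c : HornClause V}

theorem sat.concl_eq_true (hc : c.sat v) (hprem : ∀ x ∈ c.prem, v x = true) {y : V}
    (hy : c.concl = some y) : v y = true := by
  obtain ⟨y', hy', hvy'⟩ := hc hprem
  rw [hy, Option.some_inj] at hy'
  exact hy' ▸ hvy'

theorem sat.concl_ne_none (hc : c.sat v) (hprem : ∀ x ∈ c.prem, v x = true) :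
    c.concl ≠ none := by
  obtain ⟨y, hy, -⟩ := hc hprem
  simp [hy]

end HornClause

section Pebbling

variable {V : Type} {C : Set (HornClause V)} {v : V → Bool}

theorem Marked.eval_eq_true (hv : SatAll v C) {y : V} (h : Marked C y) : v y = true := by
  induction h with
  | step c hc y hy _ ih => exact (hv c hc).concl_eq_true ih hy

theorem MarkedRel.eval_eq_true (hv : SatAll v C) {z y : V} (hz : v z = true)
    (h : MarkedRel C z y) : v y = true := by
  induction h with
  | self => exact hz
  | step c hc y hy S hS _ ih =>
    refine (hv c hc).concl_eq_true (fun a ha => ?_) hy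
    rcases hS a ha with haS | haMarked
    · exact ih a haS
    · exact haMarked.eval_eq_true hv

theorem not_botMarkedRel_of_satAll (hv : SatAll v C) {z : V} (hz : v z = true) :
    ¬ BotMarkedRel C z := by
  rintro ⟨c, hc, hnone, hprem⟩
  refine (hv c hc).concl_ne_none (fun a ha => ?_) hnone
  rcases hprem a ha with haMarked | haRel
  · exact haMarked.eval_eq_true hv
  · exact haRel.eval_eq_true hv hz

open Classical in
noncomputable def relMarkingValuation (C : Set (HornClause V)) (z : V) : V → Bool :=
  fun y => decide (Marked C y ∨ MarkedRel C z y)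

open Classical in
theorem relMarkingValuation_self (z : V) : relMarkingValuation C z z = true :=
  decide_eq_true (Or.inr MarkedRel.self)

theorem satAll_relMarkingValuation {z : V} (hbot : ¬ BotMarkedRel C z) :
    SatAll (relMarkingValuation C z) C := by
  classical
  intro c hc hprem
  have hmarked : ∀ a ∈ c.prem, Marked C a ∨ MarkedRel C z a := fun a ha =>
    of_decide_eq_true (hprem a ha)
  cases hconcl : c.concl with
  | none => exact absurd ⟨c, hc, hconcl, hmarked⟩ hbot
  | some y =>
    have hy : MarkedRel C z y := by
      refine MarkedRel.step c hc y hconcl {a ∈ c.prem | MarkedRel C z a} (fun a ha => ?_)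
        (fun a ha => (Finset.mem_filter.mp ha).2)
      rcases hmarked a ha with haMarked | haRel
      · exact Or.inr haMarked
      · exact Or.inl (Finset.mem_filter.mpr ⟨ha, haRel⟩)
    exact ⟨y, rfl, decide_eq_true (Or.inr hy)⟩

end Pebbling

theorem stmt8_general {V : Type} (C : Set (HornClause V)) (x : V) :
    (∀ v : V → Bool, SatAll v C → v x = false) ↔ BotMarkedRel C x := by
  constructor
  · intro hforced
    by_contra hbot
    have hx := hforced _ (satAll_relMarkingValuation hbot)
    rw [relMarkingValuation_self] at hx
    exact Bool.noConfusion hx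
  · intro hbot v hv
    by_contra hx
    exact not_botMarkedRel_of_satAll hv (Bool.not_eq_false _ ▸ hx) hbot

/-- For a satisfiable Horn set, a variable x is forced to false iff False is
marked '*x' in the complete marking. -/
theorem stmt8 {V : Type} [Fintype V] (C : Set (HornClause V))
    (hsat : ∃ v : V → Bool, SatAll v C) (x : V) :
    (∀ v : V → Bool, SatAll v C → v x = false) ↔ BotMarkedRel C x :=
  stmt8_general C x
end

section
/- Let C be a satisfiable set of Horn clauses over a finite set X with the complete pebbling marking. Then a variable x ∈ X is forced to true by C (i.e., v(x) = true in every satisfying valuation) if and only if x is marked '*'. -/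
/-!
Marking is sound: every satisfying valuation makes each marked variable true, since a
clause whose premises are all true must have a true conclusion. Conversely, the valuation
"true exactly on the marked variables" is the least model of `C`: it satisfies every clause
with a conclusion because the marking is saturated, and every goal clause because a goal
clause with all premises marked would be violated by every valuation, contradicting
satisfiability. A variable true in all models is true in this one, hence marked.
-/

section

variable {V : Type} {C : Set (HornClause V)}

theorem not_botMarked_of_satAll {v : V → Bool} (hv : SatAll v C) : ¬ BotMarked C := by
  rintro ⟨c, hc, hnone, hprem⟩
  obtain ⟨y, hy, -⟩ := hv c hc fun x hx => (hprem x hx).eq_true_of_satAll hv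
  simp [hnone] at hy

open Classical in
theorem satAll_decide_marked (hC : ¬ BotMarked C) : SatAll (fun y => decide (Marked C y)) C := by
  intro c hc hprem
  have hmarked : ∀ x ∈ c.prem, Marked C x := fun x hx => of_decide_eq_true (hprem x hx)
  cases hconcl : c.concl with
  | none => exact absurd ⟨c, hc, hconcl, hmarked⟩ hC
  | some y => exact ⟨y, rfl, decide_eq_true (.step c hc y hconcl hmarked)⟩

end

theorem stmt9_general {V : Type} (C : Set (HornClause V))
    (hsat : ∃ v : V → Bool, SatAll v C) (x : V) :
    (∀ v : V → Bool, SatAll v C → v x = true) ↔ Marked C x := by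
  classical
  constructor
  · intro hforced
    obtain ⟨v₀, hv₀⟩ := hsat
    exact of_decide_eq_true (hforced _ (satAll_decide_marked (not_botMarked_of_satAll hv₀)))
  · exact fun hx v hv => hx.eq_true_of_satAll hv

/-- For a satisfiable Horn set, a variable x is forced to true iff x is marked
'*' in the complete marking. -/
theorem stmt9 {V : Type} [Fintype V] (C : Set (HornClause V))
    (hsat : ∃ v : V → Bool, SatAll v C) (x : V) :
    (∀ v : V → Bool, SatAll v C → v x = true) ↔ Marked C x :=
  stmt9_general C hsat x
end

section
/- Let X be a finite set of data points in D and suppose X is separable with respect to a set of base predicates P: for every pair of distinct points d₁, d₂ ∈ X there exists ρ ∈ P with ρ(d₁) ≠ ρ(d₂). Then for every function f : X → Bool there exists a decision tree over predicates from P that classifies every point of X according to f. -/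
inductive DTree (D : Type) where
  | leaf (b : Bool)
  | node (ρ : D → Bool) (l r : DTree D)

def DTree.eval {D : Type} : DTree D → D → Bool
  | .leaf b, _ => b
  | .node ρ l r, d => if ρ d then l.eval d else r.eval d

/-- Root-to-leaf paths: each path is a list of (predicate, direction) pairs
(direction `true` = left child, taken when the predicate holds) together with
the Boolean label of the leaf reached. -/
def DTree.paths {D : Type} : DTree D → List (List ((D → Bool) × Bool) × Bool)
  | .leaf b => [([], b)]
  | .node ρ l r =>
      (l.paths.map fun p => ((ρ, true) :: p.1, p.2)) ++
      (r.paths.map fun p => ((ρ, false) :: p.1, p.2))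

/-- The formula ψ_T : the disjunction, over root-to-true-leaf paths, of the
conjunctions of the predicates along the path (positively for left turns,
negatively for right turns). -/
def DTree.formula {D : Type} (t : DTree D) (d : D) : Prop :=
  ∃ p ∈ t.paths, p.2 = true ∧ ∀ q ∈ p.1, q.1 d = q.2

def DTree.predsIn {D : Type} : DTree D → Set (D → Bool) → Prop
  | .leaf _, _ => True
  | .node ρ l r, P => ρ ∈ P ∧ l.predsIn P ∧ r.predsIn P

/-- Any Boolean labeling of a separable finite set of points is realized by a
decision tree over the separating predicates. -/
theorem stmt15 {D : Type} (X : Finset D) (P : Set (D → Bool))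
    (hsep : ∀ d₁ ∈ X, ∀ d₂ ∈ X, d₁ ≠ d₂ → ∃ ρ ∈ P, ρ d₁ ≠ ρ d₂)
    (f : D → Bool) :
    ∃ t : DTree D, t.predsIn P ∧ ∀ d ∈ X, t.eval d = f d := by
  induction X using Finset.strongInduction with
  | _ X ih =>
    by_cases hconst : ∃ b : Bool, ∀ d ∈ X, f d = b
    · obtain ⟨b, hb⟩ := hconst
      exact ⟨.leaf b, trivial, fun d hd => by simp [DTree.eval, hb d hd]⟩
    · push_neg at hconst
      obtain ⟨d₁, h₁, hd₁⟩ := hconst true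
      obtain ⟨d₂, h₂, hd₂⟩ := hconst false
      have hne : d₁ ≠ d₂ := by
        rintro rfl
        cases h : f d₁ <;> simp [h] at hd₁ hd₂
      obtain ⟨ρ, hρP, hρ⟩ := hsep d₁ h₁ d₂ h₂ hne
      have hsub1 : X.filter (fun d => ρ d = true) ⊂ X := by
        refine ⟨Finset.filter_subset _ _, fun hX => ?_⟩
        have t1 := (Finset.mem_filter.mp (hX h₁)).2
        have t2 := (Finset.mem_filter.mp (hX h₂)).2
        exact hρ (t1.trans t2.symm)
      have hsub2 : X.filter (fun d => ρ d = false) ⊂ X := by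
        refine ⟨Finset.filter_subset _ _, fun hX => ?_⟩
        have t1 := (Finset.mem_filter.mp (hX h₁)).2
        have t2 := (Finset.mem_filter.mp (hX h₂)).2
        exact hρ (t1.trans t2.symm)
      obtain ⟨l, hlP, hl⟩ := ih _ hsub1
        (fun a ha b hb => hsep a (Finset.filter_subset _ _ ha) b (Finset.filter_subset _ _ hb))
      obtain ⟨r, hrP, hr⟩ := ih _ hsub2
        (fun a ha b hb => hsep a (Finset.filter_subset _ _ ha) b (Finset.filter_subset _ _ hb))
      refine ⟨.node ρ l r, ⟨hρP, hlP, hrP⟩, fun d hd => ?_⟩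
      simp only [DTree.eval]
      by_cases h : ρ d = true
      · rw [if_pos h]
        exact hl d (Finset.mem_filter.mpr ⟨hd, h⟩)
      · rw [if_neg h]
        exact hr d (Finset.mem_filter.mpr ⟨hd, by simpa using h⟩)
end

section
/- Let X be a finite separable set of data points, C a satisfiable set of Horn constraints over X (Horn clauses whose variables are the points of X), and P a separating set of base predicates. Then there exists a decision tree T over P such that the induced valuation v_T on X (v_T(d) = true iff T classifies d as true) satisfies every Horn constraint in C. -/
theorem exists_tree_agree {D : Type} (P : Set (D → Bool)) (f : D → Bool) :
    ∀ X : Finset D, (∀ d₁ ∈ X, ∀ d₂ ∈ X, d₁ ≠ d₂ → ∃ ρ ∈ P, ρ d₁ ≠ ρ d₂) →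
    ∃ t : DTree D, t.predsIn P ∧ ∀ d ∈ X, t.eval d = f d := by
  intro X
  induction X using Finset.strongInduction with
  | _ X ih =>
    intro hsep
    by_cases h : ∃ d₁ ∈ X, ∃ d₂ ∈ X, f d₁ ≠ f d₂
    · obtain ⟨d₁, hd₁, d₂, hd₂, hne⟩ := h
      have hdne : d₁ ≠ d₂ := fun e => hne (by rw [e])
      obtain ⟨ρ, hρP, hρne⟩ := hsep d₁ hd₁ d₂ hd₂ hdne
      set X₁ := X.filter (fun d => ρ d = true) with hX₁
      set X₂ := X.filter (fun d => ρ d = false) with hX₂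
      have hone : ρ d₁ = false ∨ ρ d₂ = false := by
        cases h1 : ρ d₁
        · exact Or.inl rfl
        · cases h2 : ρ d₂
          · exact Or.inr rfl
          · exact absurd (h1.trans h2.symm) hρne
      have htwo : ρ d₁ = true ∨ ρ d₂ = true := by
        cases h1 : ρ d₁
        · cases h2 : ρ d₂
          · exact absurd (h1.trans h2.symm) hρne
          · exact Or.inr rfl
        · exact Or.inl rfl
      have hsub₁ : X₁ ⊂ X := by
        refine ⟨Finset.filter_subset _ _, fun hs => ?_⟩
        rcases hone with h1 | h1
        · have := hs hd₁; simp [hX₁, Finset.mem_filter, h1] at this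
        · have := hs hd₂; simp [hX₁, Finset.mem_filter, h1] at this
      have hsub₂ : X₂ ⊂ X := by
        refine ⟨Finset.filter_subset _ _, fun hs => ?_⟩
        rcases htwo with h1 | h1
        · have := hs hd₁; simp [hX₂, Finset.mem_filter, h1] at this
        · have := hs hd₂; simp [hX₂, Finset.mem_filter, h1] at this
      have hsep₁ : ∀ a ∈ X₁, ∀ b ∈ X₁, a ≠ b → ∃ ρ ∈ P, ρ a ≠ ρ b :=
        fun a ha b hb => hsep a (hsub₁.1 ha) b (hsub₁.1 hb)
      have hsep₂ : ∀ a ∈ X₂, ∀ b ∈ X₂, a ≠ b → ∃ ρ ∈ P, ρ a ≠ ρ b :=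
        fun a ha b hb => hsep a (hsub₂.1 ha) b (hsub₂.1 hb)
      obtain ⟨t₁, ht₁P, ht₁⟩ := ih X₁ hsub₁ hsep₁
      obtain ⟨t₂, ht₂P, ht₂⟩ := ih X₂ hsub₂ hsep₂
      refine ⟨.node ρ t₁ t₂, ⟨hρP, ht₁P, ht₂P⟩, fun d hd => ?_⟩
      cases hb : ρ d with
      | true =>
        have : d ∈ X₁ := by simp [hX₁, Finset.mem_filter, hd, hb]
        simp [DTree.eval, hb, ht₁ d this]
      | false =>
        have : d ∈ X₂ := by simp [hX₂, Finset.mem_filter, hd, hb]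
        simp [DTree.eval, hb, ht₂ d this]
    · push_neg at h
      by_cases hX : X.Nonempty
      · obtain ⟨d₀, hd₀⟩ := hX
        exact ⟨.leaf (f d₀), trivial, fun d hd => (h d hd d₀ hd₀).symm⟩
      · exact ⟨.leaf true, trivial, fun d hd => absurd ⟨d, hd⟩ hX⟩

/-- Existence part of Theorem 1: for a separable finite set of points and a
satisfiable set of Horn constraints over them, some decision tree over the
base predicates induces a valuation satisfying all the constraints. -/
theorem stmt16 {D : Type} (X : Finset D) (P : Set (D → Bool))
    (hsep : ∀ d₁ ∈ X, ∀ d₂ ∈ X, d₁ ≠ d₂ → ∃ ρ ∈ P, ρ d₁ ≠ ρ d₂)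
    (C : Set (HornClause D))
    (hvars : ∀ c ∈ C, (∀ x ∈ c.prem, x ∈ X) ∧ (∀ y, c.concl = some y → y ∈ X))
    (hsat : ∃ v : D → Bool, SatAll v C) :
    ∃ t : DTree D, t.predsIn P ∧ SatAll (fun d => t.eval d) C := by
  obtain ⟨v, hv⟩ := hsat
  obtain ⟨t, htP, ht⟩ := exists_tree_agree P v X hsep
  refine ⟨t, htP, fun c hc hprem => ?_⟩
  obtain ⟨hpX, hcX⟩ := hvars c hc
  obtain ⟨y, hy, hvy⟩ := hv c hc (fun x hx => (ht x (hpX x hx)).symm ▸ hprem x hx)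
  exact ⟨y, hy, (ht y (hcX y hy)).trans hvy⟩
end
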